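/- arXiv:2003.11298 — 2 statements merged into one kernel-verified Lean document; each statement's English description precedes it below -/
import Mathlib

section
/- In the Section 7 setting, the signed graph Γ fails the Kähler extension criterion: there exists a pair of adjacent edges of Γ — namely the two basic edges emanating from any interior vertex — which are not both contained in any 2-valent signed GKM subgraph of Γ of polytope type. -/
open Classical

namespace GKMPaper

/-- `ℤ^m`, the weight lattice. -/
abbrev Zm (m : ℕ) := Fin m → ℤ

/-- The relation identifying a vector with its negative. -/
def pmRel (m : ℕ) (a b : Zm m) : Prop := a = b ∨ a = -b

theorem pmRel_equiv (m : ℕ) : Equivalence (pmRel m) := by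
  constructor
  · intro a; exact Or.inl rfl
  · intro a b hab
    rcases hab with hh | hh
    · exact Or.inl hh.symm
    · exact Or.inr (by rw [hh, neg_neg])
  · intro a b c h1 h2
    rcases h1 with h1 | h1 <;> rcases h2 with h2 | h2
    · exact Or.inl (h1.trans h2)
    · exact Or.inr (h1.trans h2)
    · exact Or.inr (by rw [h1, h2])
    · exact Or.inl (by rw [h1, h2, neg_neg])

def pmSetoid (m : ℕ) : Setoid (Zm m) := ⟨pmRel m, pmRel_equiv m⟩

/-- `ℤ^m / ±1`. -/
def ZmPM (m : ℕ) := Quotient (pmSetoid m)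

/-- The projection `ℤ^m → ℤ^m/±1`. -/
def pm {m : ℕ} (a : Zm m) : ZmPM m := Quotient.mk (pmSetoid m) a

/-- Linear independence over `ℤ`. -/
def Indep {m : ℕ} (a b : Zm m) : Prop :=
  ∀ c d : ℤ, c • a + d • b = 0 → c = 0 ∧ d = 0

/-- An abstract graph with finite vertex and edge sets, each edge occurring with
both orientations, and no loops. -/
structure OrGraph : Type 1 where
  V : Type
  E : Type
  fV : Fintype V
  fE : Fintype E
  dV : DecidableEq V
  dE : DecidableEq E
  src : E → V
  dst : E → V
  rev : E → E
  rev_rev : ∀ e, rev (rev e) = e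
  rev_ne : ∀ e, rev e ≠ e
  src_rev : ∀ e, src (rev e) = dst e
  no_loop : ∀ e, src e ≠ dst e

attribute [instance] OrGraph.fV OrGraph.fE OrGraph.dV OrGraph.dE

/-- A connection on a graph. -/
structure Connection (G : OrGraph) where
  t : G.E → G.E → G.E
  src_t : ∀ e f, G.src f = G.src e → G.src (t e f) = G.dst e
  t_self : ∀ e, t e e = G.rev e
  t_inv : ∀ e f, G.src f = G.src e → t (G.rev e) (t e f) = f

/-- `k`-valence. -/
def OrGraph.Regular (G : OrGraph) (k : ℕ) : Prop :=
  ∀ v : G.V, Fintype.card {e : G.E // G.src e = v} = k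

def OrGraph.Adj (G : OrGraph) (v w : G.V) : Prop :=
  ∃ e, G.src e = v ∧ G.dst e = w

def OrGraph.IsConn (G : OrGraph) : Prop :=
  ∀ v w : G.V, Relation.ReflTransGen G.Adj v w

/-- Compatibility of a connection with an unsigned axial function. -/
def UnsignedCompat {m : ℕ} (G : OrGraph) (α : G.E → ZmPM m) (C : Connection G) : Prop :=
  (∀ e f : G.E, G.src f = G.src e → e ≠ f →
      ∀ a b : Zm m, pm a = α e → pm b = α f → Indep a b) ∧
  (∀ e f : G.E, G.src f = G.src e →
      ∃ (a g : Zm m) (c : ℤ), pm a = α f ∧ pm g = α e ∧ α (C.t e f) = pm (a + c • g)) ∧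
  (∀ e : G.E, α (G.rev e) = α e)

/-- `(G, α)` is an (unsigned) abstract GKM graph of valence `k` with labels in `ℤ^m/±1`. -/
def IsGKM {m : ℕ} (G : OrGraph) (k : ℕ) (α : G.E → ZmPM m) : Prop :=
  G.Regular k ∧ G.IsConn ∧ ∃ C : Connection G, UnsignedCompat G α C

/-- Compatibility of a connection with a signed axial function. -/
def SignedCompat {m : ℕ} (G : OrGraph) (α : G.E → Zm m) (C : Connection G) : Prop :=
  (∀ e f : G.E, G.src f = G.src e → e ≠ f → Indep (α e) (α f)) ∧
  (∀ e f : G.E, G.src f = G.src e → ∃ c : ℤ, α (C.t e f) = α f + c • α e) ∧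
  (∀ e : G.E, α (G.rev e) = - α e)

/-- `(G, α)` is a signed abstract GKM graph of valence `k` with labels in `ℤ^m`. -/
def IsSignedGKM {m : ℕ} (G : OrGraph) (k : ℕ) (α : G.E → Zm m) : Prop :=
  G.Regular k ∧ G.IsConn ∧ ∃ C : Connection G, SignedCompat G α C

/-- Effectivity of an unsigned GKM graph: at every vertex, the labels of the
outgoing edges lift to a generating set of `ℤ^m`. -/
def Effective {m : ℕ} (G : OrGraph) (α : G.E → ZmPM m) : Prop :=
  ∀ v : G.V, ∃ lift : {e : G.E // G.src e = v} → Zm m,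
    (∀ e, pm (lift e) = α e.1) ∧ Submodule.span ℤ (Set.range lift) = ⊤

def SignedEffective {m : ℕ} (G : OrGraph) (α : G.E → Zm m) : Prop :=
  ∀ v : G.V,
    Submodule.span ℤ (Set.range (fun e : {e : G.E // G.src e = v} => α e.1)) = ⊤

/-- A graph fibration: a morphism sending vertices to vertices and horizontal
edges to edges, bijectively from the horizontal edges at `p` to the edges at `π(p)`. -/
structure GraphFib (G B : OrGraph) where
  onV : G.V → B.V
  onE : G.E → B.E
  src_onE : ∀ e, onV (G.src e) ≠ onV (G.dst e) → B.src (onE e) = onV (G.src e)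
  dst_onE : ∀ e, onV (G.src e) ≠ onV (G.dst e) → B.dst (onE e) = onV (G.dst e)
  rev_onE : ∀ e, onV (G.src e) ≠ onV (G.dst e) → onE (G.rev e) = B.rev (onE e)

def GraphFib.Vertical {G B : OrGraph} (π : GraphFib G B) (e : G.E) : Prop :=
  π.onV (G.src e) = π.onV (G.dst e)

def GraphFib.IsFib {G B : OrGraph} (π : GraphFib G B) : Prop :=
  ∀ p : G.V, Function.Bijective
    (fun e : {e : G.E // G.src e = p ∧ ¬ π.Vertical e} =>
      (⟨π.onE e.1, by rw [π.src_onE e.1 e.2.2, e.2.1]⟩ : {f : B.E // B.src f = π.onV p}))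

/-- The extra conditions for a (unsigned) GKM fibration, w.r.t. connections `C`, `CB`. -/
def GKMFibCompat {m : ℕ} {G B : OrGraph} (αΓ : G.E → ZmPM m) (αB : B.E → ZmPM m)
    (π : GraphFib G B) (C : Connection G) (CB : Connection B) : Prop :=
  (∀ e, ¬ π.Vertical e → αΓ e = αB (π.onE e)) ∧
  (∀ e f, G.src f = G.src e → π.Vertical f → π.Vertical (C.t e f)) ∧
  (∀ e f, G.src f = G.src e → ¬ π.Vertical e → ¬ π.Vertical f →
      ¬ π.Vertical (C.t e f) ∧ π.onE (C.t e f) = CB.t (π.onE e) (π.onE f))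

/-- `π` is a GKM fibration of unsigned GKM graphs. -/
def IsGKMFib {m : ℕ} {G B : OrGraph} (αΓ : G.E → ZmPM m) (αB : B.E → ZmPM m)
    (π : GraphFib G B) : Prop :=
  π.IsFib ∧ ∃ (C : Connection G) (CB : Connection B),
    UnsignedCompat G αΓ C ∧ UnsignedCompat B αB CB ∧ GKMFibCompat αΓ αB π C CB

def SignedGKMFibCompat {m : ℕ} {G B : OrGraph} (sΓ : G.E → Zm m) (sB : B.E → Zm m)
    (π : GraphFib G B) (C : Connection G) (CB : Connection B) : Prop :=
  (∀ e, ¬ π.Vertical e → sΓ e = sB (π.onE e)) ∧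
  (∀ e f, G.src f = G.src e → π.Vertical f → π.Vertical (C.t e f)) ∧
  (∀ e f, G.src f = G.src e → ¬ π.Vertical e → ¬ π.Vertical f →
      ¬ π.Vertical (C.t e f) ∧ π.onE (C.t e f) = CB.t (π.onE e) (π.onE f))

/-- `π` is a signed GKM fibration of signed GKM graphs. -/
def IsSignedGKMFib {m : ℕ} {G B : OrGraph} (sΓ : G.E → Zm m) (sB : B.E → Zm m)
    (π : GraphFib G B) : Prop :=
  π.IsFib ∧ ∃ (C : Connection G) (CB : Connection B),
    SignedCompat G sΓ C ∧ SignedCompat B sB CB ∧ SignedGKMFibCompat sΓ sB π C CB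

/-- `(π, ft)` is a fiberwise signed fibration: `ft` is a lift of `αΓ` on the
vertical edges, satisfying the congruence condition w.r.t. suitable connections. -/
def IsFiberwiseSigned {m : ℕ} {G B : OrGraph} (αΓ : G.E → ZmPM m) (αB : B.E → ZmPM m)
    (π : GraphFib G B) (ft : G.E → Zm m) : Prop :=
  π.IsFib ∧
  (∀ e, π.Vertical e → pm (ft e) = αΓ e) ∧
  (∀ e, π.Vertical e → ft (G.rev e) = - ft e) ∧
  ∃ (C : Connection G) (CB : Connection B),
    UnsignedCompat G αΓ C ∧ UnsignedCompat B αB CB ∧ GKMFibCompat αΓ αB π C CB ∧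
    ∀ e f, G.src f = G.src e → π.Vertical f →
      ∃ (g : Zm m) (c : ℤ), pm g = αΓ e ∧ ft (C.t e f) = ft f + c • g

/-- Isomorphism of unsigned GKM graphs. -/
structure GKMIso {m : ℕ} (G : OrGraph) (α : G.E → ZmPM m)
    (G' : OrGraph) (α' : G'.E → ZmPM m) : Type where
  fV : G.V ≃ G'.V
  fE : G.E ≃ G'.E
  φ : Zm m ≃ₗ[ℤ] Zm m
  src_comm : ∀ e, G'.src (fE e) = fV (G.src e)
  dst_comm : ∀ e, G'.dst (fE e) = fV (G.dst e)
  rev_comm : ∀ e, fE (G.rev e) = G'.rev (fE e)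
  lab : ∀ (e : G.E) (a : Zm m), pm a = α e → α' (fE e) = pm (φ a)

/-- Isomorphism of signed GKM graphs. -/
structure SignedGKMIso {m : ℕ} (G : OrGraph) (α : G.E → Zm m)
    (G' : OrGraph) (α' : G'.E → Zm m) : Type where
  fV : G.V ≃ G'.V
  fE : G.E ≃ G'.E
  φ : Zm m ≃ₗ[ℤ] Zm m
  src_comm : ∀ e, G'.src (fE e) = fV (G.src e)
  dst_comm : ∀ e, G'.dst (fE e) = fV (G.dst e)
  rev_comm : ∀ e, fE (G.rev e) = G'.rev (fE e)
  lab : ∀ e, α' (fE e) = φ (α e)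

/-- Equivalence of fiberwise signed fibrations over the same base (identity on `ℤ^m`). -/
structure FSFEquiv {m : ℕ} {G B G' : OrGraph}
    (αΓ : G.E → ZmPM m) (π : GraphFib G B) (ft : G.E → Zm m)
    (αΓ' : G'.E → ZmPM m) (π' : GraphFib G' B) (ft' : G'.E → Zm m) : Type where
  fV : G.V ≃ G'.V
  fE : G.E ≃ G'.E
  src_comm : ∀ e, G'.src (fE e) = fV (G.src e)
  dst_comm : ∀ e, G'.dst (fE e) = fV (G.dst e)
  rev_comm : ∀ e, fE (G.rev e) = G'.rev (fE e)
  lab : ∀ e, αΓ' (fE e) = αΓ e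
  baseV : ∀ p, π'.onV (fV p) = π.onV p
  baseE : ∀ e, ¬ π.Vertical e → π'.onE (fE e) = π.onE e
  fiblab : ∀ e, π.Vertical e → ft' (fE e) = ft e

/-- Equivalence of signed GKM fibrations over the same base (identity on `ℤ^m`). -/
structure SFEquiv {m : ℕ} {G B G' : OrGraph}
    (sΓ : G.E → Zm m) (π : GraphFib G B)
    (sΓ' : G'.E → Zm m) (π' : GraphFib G' B) : Type where
  fV : G.V ≃ G'.V
  fE : G.E ≃ G'.E
  src_comm : ∀ e, G'.src (fE e) = fV (G.src e)
  dst_comm : ∀ e, G'.dst (fE e) = fV (G.dst e)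
  rev_comm : ∀ e, fE (G.rev e) = G'.rev (fE e)
  lab : ∀ e, sΓ' (fE e) = sΓ e
  baseV : ∀ p, π'.onV (fV p) = π.onV p
  baseE : ∀ e, ¬ π.Vertical e → π'.onE (fE e) = π.onE e

/-- Realizing `ℤ²` inside `ℝ² = ℂ`. -/
noncomputable def toC (a : Zm 2) : ℂ := (a 0 : ℝ) + (a 1 : ℝ) * Complex.I

def cross (a b : ℂ) : ℝ := a.re * b.im - a.im * b.re

/-- A vertex of a signed GKM graph with labels in `ℤ²` is interior if the cone
spanned by the labels of the edges emanating from it is all of `ℝ²`. -/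
def InteriorVtx (G : OrGraph) (α : G.E → Zm 2) (p : G.V) : Prop :=
  ∀ x : ℂ, ∃ c : G.E → ℝ, (∀ e, 0 ≤ c e) ∧
    x = ∑ e ∈ Finset.univ.filter (fun e : G.E => G.src e = p), c e • toC (α e)

/-- The angle from `w` to `w'`, represented in `[0, 2π)` if `ε = true`,
and in `(-2π, 0]` if `ε = false`. -/
noncomputable def angTo (ε : Bool) (w w' : ℂ) : ℝ :=
  if ε then (if (w' / w).arg < 0 then (w' / w).arg + 2 * Real.pi else (w' / w).arg)
  else (if 0 < (w' / w).arg then (w' / w).arg - 2 * Real.pi else (w' / w).arg)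

/-- The winding number of a cyclic sequence of vectors w.r.t. the orientation `ε`. -/
noncomputable def winding {nn : ℕ} [NeZero nn] (w : ZMod nn → ℂ) (ε : Bool) : ℝ :=
  (1 / (2 * Real.pi)) * ∑ i : ZMod nn, |angTo ε (w i) (w (i + 1))|

def LocallyConvex {nn : ℕ} (w : ZMod nn → ℂ) : Prop :=
  (∀ i, angTo true (w i) (w (i + 1)) ∈ Set.Ioo 0 Real.pi) ∨
  (∀ i, angTo false (w i) (w (i + 1)) ∈ Set.Ioo (-Real.pi) 0)

/-- `ε` is the preferred orientation of the locally convex sequence `w`. -/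
def Preferred {nn : ℕ} (w : ZMod nn → ℂ) (ε : Bool) : Prop :=
  (ε = true ∧ ∀ i, angTo true (w i) (w (i + 1)) ∈ Set.Ioo 0 Real.pi) ∨
  (ε = false ∧ ∀ i, angTo false (w i) (w (i + 1)) ∈ Set.Ioo (-Real.pi) 0)

/-- `P` lists the vertices of a strictly convex polygon in cyclic order. -/
def ConvexCyclic {nn : ℕ} (P : ZMod nn → ℂ) : Prop :=
  (∀ i j, j ≠ i → j ≠ i + 1 → 0 < cross (P (i + 1) - P i) (P j - P i)) ∨
  (∀ i j, j ≠ i → j ≠ i + 1 → cross (P (i + 1) - P i) (P j - P i) < 0)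

def SubAdj (G : OrGraph) (S : Set G.E) (v w : G.V) : Prop :=
  ∃ e ∈ S, G.src e = v ∧ G.dst e = w

/-- `S` is (the edge set of) a connected `2`-valent signed GKM subgraph of `(G, α)`. -/
def IsSigned2ValentSub (G : OrGraph) (α : G.E → Zm 2) (S : Set G.E) : Prop :=
  S.Nonempty ∧
  (∀ e ∈ S, G.rev e ∈ S) ∧
  (∀ v : G.V, (∃ e ∈ S, G.src e = v) → Nat.card {e : G.E // e ∈ S ∧ G.src e = v} = 2) ∧
  (∀ v w : G.V, (∃ e ∈ S, G.src e = v) → (∃ e ∈ S, G.src e = w) →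
      Relation.ReflTransGen (SubAdj G S) v w) ∧
  ∃ T : G.E → G.E → G.E,
    (∀ e f, e ∈ S → f ∈ S → G.src f = G.src e → T e f ∈ S ∧ G.src (T e f) = G.dst e) ∧
    (∀ e, e ∈ S → T e e = G.rev e) ∧
    (∀ e f, e ∈ S → f ∈ S → G.src f = G.src e → T (G.rev e) (T e f) = f) ∧
    (∀ e f, e ∈ S → f ∈ S → G.src f = G.src e → ∃ c : ℤ, α (T e f) = α f + c • α e)

/-- A `2`-valent signed GKM subgraph of polytope type: it is a cycle realized by the
boundary edges of a simple convex `2`-polytope, with labels representing the slopes. -/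
def IsPolytopeTypeSub (G : OrGraph) (α : G.E → Zm 2) (S : Set G.E) : Prop :=
  IsSigned2ValentSub G α S ∧
  ∃ np : ℕ, 3 ≤ np ∧
    ∃ (cyc : ZMod np → G.E) (P : ZMod np → ℂ) (t : ZMod np → ℝ),
      (∀ i, cyc i ∈ S) ∧
      (∀ ed ∈ S, ∃ i, ed = cyc i ∨ ed = G.rev (cyc i)) ∧
      (∀ i, G.dst (cyc i) = G.src (cyc (i + 1))) ∧
      ConvexCyclic P ∧
      (∀ i, 0 < t i) ∧
      (∀ i, P (i + 1) - P i = t i • toC (α (cyc i)))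

/-- A fibration over an `n`-gon base is of product type if the lifts of a path
once around the base are closed. -/
def ProductType {G B : OrGraph} (π : GraphFib G B) {nn : ℕ} (eB : ZMod nn → B.E) : Prop :=
  ∃ l : ZMod nn → G.E,
    ∀ i, ¬ π.Vertical (l i) ∧ π.onE (l i) = eB i ∧ G.dst (l i) = G.src (l (i + 1))

/-- `ℤ`-indexed `n`-gon data for a `2`-valent base graph. -/
structure ZGonData (B : OrGraph) (n : ℕ) where
  v : ℤ → B.V
  eB : ℤ → B.E
  v_per : ∀ i, v (i + n) = v i
  e_per : ∀ i, eB (i + n) = eB i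
  src_e : ∀ i, B.src (eB i) = v i
  dst_e : ∀ i, B.dst (eB i) = v (i + 1)
  v_inj : ∀ i j : ℤ, 0 ≤ i → i < n → 0 ≤ j → j < n → v i = v j → i = j
  v_surj : ∀ w : B.V, ∃ i : ℤ, v i = w
  e_cover : ∀ ed : B.E, ∃ i : ℤ, ed = eB i ∨ ed = B.rev (eB i)

/-- A choice of sign representatives `γ_i` of the base labels with
`γ_i ≡ -γ_{i+2} (mod γ_{i+1})` for all `i ∈ ℤ`. -/
structure GammaData {B : OrGraph} {n : ℕ} (αB : B.E → ZmPM 2) (D : ZGonData B n) where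
  γ : ℤ → Zm 2
  lift : ∀ i, pm (γ i) = αB (D.eB i)
  cong : ∀ i, ∃ c : ℤ, γ i + γ (i + 2) = c • γ (i + 1)

/-- A fiberwise signed `3`-valent GKM fibration over `(B, αB)`. -/
structure FSFOver (B : OrGraph) (αB : B.E → ZmPM 2) : Type 1 where
  G : OrGraph
  αΓ : G.E → ZmPM 2
  hΓ : IsGKM G 3 αΓ
  π : GraphFib G B
  ft : G.E → Zm 2
  isfs : IsFiberwiseSigned αΓ αB π ft

def FSFOver.Equiv {B : OrGraph} {αB : B.E → ZmPM 2} (F F' : FSFOver B αB) : Prop :=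
  Nonempty (FSFEquiv F.αΓ F.π F.ft F'.αΓ F'.π F'.ft)

/-- A signed `3`-valent GKM fibration over the signed graph `(B, sB)`. -/
structure SFOver (B : OrGraph) (sB : B.E → Zm 2) : Type 1 where
  G : OrGraph
  sΓ : G.E → Zm 2
  hΓ : IsSignedGKM G 3 sΓ
  π : GraphFib G B
  issf : IsSignedGKMFib sΓ sB π

def SFOver.Equiv {B : OrGraph} {sB : B.E → Zm 2} (F F' : SFOver B sB) : Prop :=
  Nonempty (SFEquiv F.sΓ F.π F'.sΓ F'.π)

/-- The fibration `F` realizes the classification datum `([k], η)` w.r.t. the fixed data. -/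
def RealizesFS {B : OrGraph} {αB : B.E → ZmPM 2} {n : ℕ} (D : ZGonData B n)
    (Γd : GammaData αB D) (F : FSFOver B αB) (k : ZMod n → ℤ) (η : Bool) : Prop :=
  (η = false ↔ ProductType F.π (fun i : ZMod n => D.eB i.val)) ∧
  ∃ (gE : ℤ → F.G.E) (αf : ℤ → Zm 2) (kk : ℤ → ℤ),
    (∀ i, F.π.Vertical (gE i)) ∧
    (∀ i, F.π.onV (F.G.src (gE i)) = D.v i) ∧
    (∀ i, gE (i + n) = gE i ∨ gE (i + n) = F.G.rev (gE i)) ∧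
    (∀ i, pm (αf i) = F.αΓ (gE i)) ∧
    (∀ i, ∃ c : ℤ, αf (i + 1) = αf i + c • Γd.γ i) ∧
    (∀ i, αf i = kk i • Γd.γ (i - 1) - kk (i - 1) • Γd.γ i) ∧
    (∀ i, kk i ≠ 0) ∧
    (∀ i : ZMod n, k i = kk i.val)

/-- The signed fibration `F` realizes the classification datum `([k], η)`. -/
def RealizesS {B : OrGraph} (sB : B.E → Zm 2) {αB : B.E → ZmPM 2} {n : ℕ}
    (D : ZGonData B n) (Γd : GammaData αB D) (F : SFOver B sB)
    (k : ZMod n → ℤ) (η : Bool) : Prop :=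
  (η = false ↔ ProductType F.π (fun i : ZMod n => D.eB i.val)) ∧
  ∃ (gE : ℤ → F.G.E) (αf : ℤ → Zm 2) (kk : ℤ → ℤ),
    (∀ i, F.π.Vertical (gE i)) ∧
    (∀ i, F.π.onV (F.G.src (gE i)) = D.v i) ∧
    (∀ i, gE (i + n) = gE i ∨ gE (i + n) = F.G.rev (gE i)) ∧
    (∀ i, pm (αf i) = pm (F.sΓ (gE i))) ∧
    (∀ i, ∃ c : ℤ, αf (i + 1) = αf i + c • Γd.γ i) ∧
    (∀ i, αf i = kk i • Γd.γ (i - 1) - kk (i - 1) • Γd.γ i) ∧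
    (∀ i, kk i ≠ 0) ∧
    (∀ i : ZMod n, k i = kk i.val)

def KRel (n : ℕ) (a b : {k : ZMod n → ℤ // ∀ i, k i ≠ 0}) : Prop :=
  a.1 = b.1 ∨ a.1 = - b.1

/-- `((ℤ∖{0})^n)/±1`. -/
def KClass (n : ℕ) := Quot (KRel n)

/-- The Section 7 setting: a signed GKM fibration of twisted type of a `3`-valent
signed GKM graph `Γ` over `B`, the boundary of a 2-dimensional Delzant polytope with
`n` vertices, with `Γ` having `n-1` interior vertices; with the basic edges `f i`, `h i`
over `e i` and the fiber edges `g i`. -/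
structure Section7 : Type 1 where
  n : ℕ
  hn : 3 ≤ n
  G : OrGraph
  B : OrGraph
  aG : G.E → Zm 2
  aB : B.E → Zm 2
  hG : IsSignedGKM G 3 aG
  hB : IsSignedGKM B 2 aB
  π : GraphFib G B
  hfib : IsSignedGKMFib aG aB π
  v : ZMod n → B.V
  e : ZMod n → B.E
  v_bij : Function.Bijective v
  src_e : ∀ i, B.src (e i) = v i
  dst_e : ∀ i, B.dst (e i) = v (i + 1)
  e_cover : ∀ ed : B.E, ∃ i, ed = e i ∨ ed = B.rev (e i)
  P : ZMod n → ℂ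
  tl : ZMod n → ℝ
  tl_pos : ∀ i, 0 < tl i
  polygon : ConvexCyclic P
  slope : ∀ i, P (i + 1) - P i = tl i • toC (aB (e i))
  delzant : ∀ i, (aB (e (i - 1)) 0) * (aB (e i) 1) - (aB (e (i - 1)) 1) * (aB (e i) 0) = 1 ∨
                 (aB (e (i - 1)) 0) * (aB (e i) 1) - (aB (e (i - 1)) 1) * (aB (e i) 0) = -1
  f : ZMod n → G.E
  h : ZMod n → G.E
  g : ZMod n → G.E
  f_horiz : ∀ i, ¬ π.Vertical (f i)
  h_horiz : ∀ i, ¬ π.Vertical (h i)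
  f_over : ∀ i, π.onE (f i) = e i
  h_over : ∀ i, π.onE (h i) = e i
  f_ne_h : ∀ i, f i ≠ h i
  g_vert : ∀ i, π.Vertical (g i)
  g_src : ∀ i, G.src (g i) = G.src (f i)
  g_dst : ∀ i, G.dst (g i) = G.src (h i)
  chain_f : ∀ i : ZMod n, i + 1 ≠ 0 → G.dst (f i) = G.src (f (i + 1))
  chain_h : ∀ i : ZMod n, i + 1 ≠ 0 → G.dst (h i) = G.src (h (i + 1))
  twist_f : G.dst (f (-1)) = G.src (h 0)
  twist_h : G.dst (h (-1)) = G.src (f 0)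
  k : ZMod n → ℤ
  k_ne : ∀ i, k i ≠ 0
  fiberweight : ∀ i, aG (g i) =
    k i • aB (e (i - 1)) - (if i = 0 then - k (i - 1) else k (i - 1)) • aB (e i)
  interior_count : Nat.card {p : G.V // InteriorVtx G aG p} = n - 1

/-- The type II signed structure: the signs of the labels of every second pair
of basic edges are reversed. -/
noncomputable def Section7.alphaII (S : Section7) : S.G.E → Zm 2 :=
  fun ed =>
    if ∃ i : ZMod S.n, Odd i.val ∧
        (ed = S.f i ∨ ed = S.h i ∨ ed = S.G.rev (S.f i) ∨ ed = S.G.rev (S.h i))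
    then - S.aG ed else S.aG ed


/-!
Number the vertices of `Γ` by `ℤ/2n` so that the basic edges form a single `2n`-cycle
`j → j + 1` wrapping twice around the base (this is the twist) and the fiber edges join `j` to
`j + n`. The fiber label at `j` is `κ_j γ_{j-1} - κ_{j-1} γ_j` with `κ` antiperiodic, so `j` is
interior iff `κ_{j-1}, κ_j > 0`, and having `n - 1` interior vertices forces `κ` to be positive
on exactly one run `m, …, m + n - 1`. A convex cycle through both basic edges at an interior
vertex turns like the base polygon; at a vertex where `κ > 0`, turning into the fiber edge
would have the wrong sign, so the cycle runs along the basic edges from `m` to `m + n`. The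
edges at `m` and `m + n` are then distinct edges of a strictly convex polygon with the same
direction `γ_m`, which is impossible.
-/

@[simp] lemma cross_add_left (a b c : ℂ) : cross (a + b) c = cross a c + cross b c := by
  simp only [cross, Complex.add_re, Complex.add_im]; ring

@[simp] lemma cross_add_right (a b c : ℂ) : cross a (b + c) = cross a b + cross a c := by
  simp only [cross, Complex.add_re, Complex.add_im]; ring

@[simp] lemma cross_neg_left (a b : ℂ) : cross (-a) b = -cross a b := by
  simp only [cross, Complex.neg_re, Complex.neg_im]; ring

@[simp] lemma cross_neg_right (a b : ℂ) : cross a (-b) = -cross a b := by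
  simp only [cross, Complex.neg_re, Complex.neg_im]; ring

@[simp] lemma cross_sub_left (a b c : ℂ) : cross (a - b) c = cross a c - cross b c := by
  simp only [cross, Complex.sub_re, Complex.sub_im]; ring

@[simp] lemma cross_sub_right (a b c : ℂ) : cross a (b - c) = cross a b - cross a c := by
  simp only [cross, Complex.sub_re, Complex.sub_im]; ring

@[simp] lemma cross_smul_left (r : ℝ) (a b : ℂ) : cross (r • a) b = r * cross a b := by
  simp only [cross, Complex.real_smul, Complex.mul_re, Complex.mul_im, Complex.ofReal_re,
    Complex.ofReal_im]; ring

@[simp] lemma cross_smul_right (r : ℝ) (a b : ℂ) : cross a (r • b) = r * cross a b := by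
  simp only [cross, Complex.real_smul, Complex.mul_re, Complex.mul_im, Complex.ofReal_re,
    Complex.ofReal_im]; ring

@[simp] lemma cross_self (a : ℂ) : cross a a = 0 := by
  simp only [cross]; ring

lemma cross_swap (a b : ℂ) : cross b a = -cross a b := by
  simp only [cross]; ring

@[simp] lemma toC_neg (a : Zm 2) : toC (-a) = -toC a := by
  simp only [toC, Pi.neg_apply, Int.cast_neg, Complex.ofReal_neg]; ring

@[simp] lemma toC_sub (a b : Zm 2) : toC (a - b) = toC a - toC b := by
  simp only [toC, Pi.sub_apply, Int.cast_sub, Complex.ofReal_sub]; ring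

@[simp] lemma toC_zsmul (z : ℤ) (a : Zm 2) : toC (z • a) = (z : ℝ) • toC a := by
  simp only [toC, Pi.smul_apply, smul_eq_mul, Int.cast_mul, Complex.ofReal_mul,
    Complex.real_smul]; ring

lemma eq_cross_div_smul_add (u v x : ℂ) (huv : cross u v ≠ 0) :
    x = (cross x v / cross u v) • u + (cross u x / cross u v) • v := by
  have h : cross u v • x = cross x v • u + cross u x • v := by
    apply Complex.ext <;>
      simp only [Complex.add_re, Complex.add_im, Complex.real_smul, Complex.mul_re,
        Complex.mul_im, Complex.ofReal_re, Complex.ofReal_im, cross] <;> ring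
  rw [div_eq_inv_mul, div_eq_inv_mul, mul_smul, mul_smul, ← smul_add, ← h, smul_smul,
    inv_mul_cancel₀ huv, one_smul]

lemma cone_eq_univ_iff {u v : ℂ} (huv : cross u v ≠ 0) (s t : ℝ) :
    (∀ x : ℂ, ∃ c₁ c₂ c₃ : ℝ, 0 ≤ c₁ ∧ 0 ≤ c₂ ∧ 0 ≤ c₃ ∧
      x = c₁ • u + c₂ • v + c₃ • (s • u + t • v)) ↔ s < 0 ∧ t < 0 := by
  constructor
  · intro hcone
    obtain ⟨a₁, a₂, a₃, ha₁, -, ha₃, hu⟩ := hcone (-u)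
    obtain ⟨b₁, b₂, b₃, -, hb₂, hb₃, hv⟩ := hcone (-v)
    have hu' := congrArg (cross · v) hu
    have hv' := congrArg (cross u ·) hv
    simp only [cross_add_left, cross_add_right, cross_smul_left, cross_smul_right,
      cross_neg_left, cross_neg_right, cross_self] at hu' hv'
    constructor
    · by_contra! hs
      rcases huv.lt_or_gt with h | h <;> nlinarith [mul_nonneg ha₃ hs]
    · by_contra! ht
      rcases huv.lt_or_gt with h | h <;> nlinarith [mul_nonneg hb₃ ht]
  · rintro ⟨hs, ht⟩ x
    set α := cross x v / cross u v
    set β := cross u x / cross u v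
    -- a large multiple of `s • u + t • v` makes both remaining coefficients nonnegative
    have hs' : 0 ≤ |α| / -s := div_nonneg (abs_nonneg _) (by linarith)
    have ht' : 0 ≤ |β| / -t := div_nonneg (abs_nonneg _) (by linarith)
    have hαs : |α| / -s * -s = |α| := div_mul_cancel₀ _ (by linarith)
    have hβt : |β| / -t * -t = |β| := div_mul_cancel₀ _ (by linarith)
    refine ⟨α - (|α| / -s + |β| / -t) * s, β - (|α| / -s + |β| / -t) * t,
      |α| / -s + |β| / -t, ?_, ?_, by positivity, ?_⟩
    · nlinarith [neg_abs_le α, mul_nonneg ht' (neg_nonneg.mpr hs.le)]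
    · nlinarith [neg_abs_le β, mul_nonneg hs' (neg_nonneg.mpr ht.le)]
    · rw [eq_cross_div_smul_add u v x huv]
      module

lemma exists_nonneg_sum_three_iff {E : Type*} [DecidableEq E] {a b c : E} (hab : a ≠ b)
    (hac : a ≠ c) (hbc : b ≠ c) (F : E → ℂ) (x : ℂ) :
    (∃ w : E → ℝ, (∀ e, 0 ≤ w e) ∧ x = ∑ e ∈ {a, b, c}, w e • F e) ↔
      ∃ c₁ c₂ c₃ : ℝ, 0 ≤ c₁ ∧ 0 ≤ c₂ ∧ 0 ≤ c₃ ∧ x = c₁ • F a + c₂ • F b + c₃ • F c := by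
  have hsum : ∀ w : E → ℝ, ∑ e ∈ {a, b, c}, w e • F e = w a • F a + w b • F b + w c • F c :=
    fun w => by rw [Finset.sum_insert (by simp [hab, hac]), Finset.sum_pair hbc, add_assoc]
  constructor
  · rintro ⟨w, hw, rfl⟩
    exact ⟨w a, w b, w c, hw a, hw b, hw c, hsum w⟩
  · rintro ⟨c₁, c₂, c₃, h₁, h₂, h₃, rfl⟩
    refine ⟨fun e => if e = a then c₁ else if e = b then c₂ else if e = c then c₃ else 0,
      fun e => ?_, ?_⟩
    · dsimp only
      split_ifs <;> first | assumption | exact le_rfl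
    · rw [hsum]
      simp [hab.symm, hac.symm, hbc.symm]

lemma ZMod.natCast_ne_zero_of_lt {N a : ℕ} (ha : 0 < a) (haN : a < N) : (a : ZMod N) ≠ 0 := by
  rw [Ne, ZMod.natCast_eq_zero_iff]
  exact Nat.not_dvd_of_pos_of_lt ha haN

lemma ZMod.val_add_natCast_of_lt {N a : ℕ} [NeZero N] (j : ZMod N) (ha : a < N) :
    (j + a).val = if j.val + a < N then j.val + a else j.val + a - N := by
  rw [ZMod.val_add, ZMod.val_natCast_of_lt ha]
  have := ZMod.val_lt j
  split_ifs with h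
  · exact Nat.mod_eq_of_lt h
  · rw [Nat.mod_eq_sub_mod (by omega), Nat.mod_eq_of_lt (by omega)]

section ConvexPolygon

variable {N : ℕ} {P : ZMod N → ℂ}

lemma ConvexCyclic.exists_sign (hP : ConvexCyclic P) :
    ∃ δ : ℝ, (δ = 1 ∨ δ = -1) ∧
      ∀ i j, j ≠ i → j ≠ i + 1 → 0 < δ * cross (P (i + 1) - P i) (P j - P i) := by
  rcases hP with hP | hP
  · exact ⟨1, Or.inl rfl, fun i j h₁ h₂ => by simpa using hP i j h₁ h₂⟩
  · exact ⟨-1, Or.inr rfl, fun i j h₁ h₂ => by simpa using hP i j h₁ h₂⟩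

lemma ConvexCyclic.comp_neg (hP : ConvexCyclic P) : ConvexCyclic (fun i => P (-i)) := by
  -- the edge from `-(i+1)` to `-i` of the original polygon is traversed backwards
  have key : ∀ i j : ZMod N, cross (P (-(i + 1)) - P (-i)) (P (-j) - P (-i)) =
      -cross (P (-(i + 1) + 1) - P (-(i + 1))) (P (-j) - P (-(i + 1))) := by
    intro i j
    rw [show -(i + 1) + 1 = -i by ring,
      show P (-j) - P (-(i + 1)) = (P (-j) - P (-i)) + (P (-i) - P (-(i + 1))) by ring,
      show P (-i) - P (-(i + 1)) = -(P (-(i + 1)) - P (-i)) by ring]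
    simp only [cross_add_right, cross_neg_left, cross_self]
    ring
  have hne : ∀ i j : ZMod N, j ≠ i → j ≠ i + 1 → -j ≠ -(i + 1) ∧ -j ≠ -(i + 1) + 1 :=
    fun i j h₁ h₂ => ⟨fun h => h₂ (neg_inj.mp h), fun h => h₁ (by linear_combination -h)⟩
  rcases hP with hP | hP
  · refine Or.inr fun i j h₁ h₂ => ?_
    rw [key]
    exact neg_neg_of_pos (hP _ _ (hne i j h₁ h₂).1 (hne i j h₁ h₂).2)
  · refine Or.inl fun i j h₁ h₂ => ?_
    rw [key]
    exact neg_pos_of_neg (hP _ _ (hne i j h₁ h₂).1 (hne i j h₁ h₂).2)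

variable (hN : 3 ≤ N) {w : ZMod N → ℂ} {t : ZMod N → ℝ} (ht : ∀ i, 0 < t i)
  (hw : ∀ i, P (i + 1) - P i = t i • w i)
include hN ht hw

lemma ConvexCyclic.exists_turn_sign (hP : ConvexCyclic P) :
    ∃ δ : ℝ, (δ = 1 ∨ δ = -1) ∧ ∀ i, 0 < δ * cross (w i) (w (i + 1)) := by
  obtain ⟨δ, hδ, hconv⟩ := hP.exists_sign
  refine ⟨δ, hδ, fun i => ?_⟩
  have h₂ : i + 2 ≠ i := fun h =>
    ZMod.natCast_ne_zero_of_lt (N := N) two_pos (by omega) (by push_cast; linear_combination h)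
  have h₁ : i + 2 ≠ i + 1 := fun h =>
    ZMod.natCast_ne_zero_of_lt (N := N) one_pos (by omega) (by push_cast; linear_combination h)
  have h := hconv i (i + 2) h₂ h₁
  rw [show P (i + 2) - P i = (P (i + 1 + 1) - P (i + 1)) + (P (i + 1) - P i) by ring_nf,
    hw, hw] at h
  simp only [cross_add_right, cross_smul_left, cross_smul_right, cross_self] at h
  have := mul_pos (ht i) (ht (i + 1))
  nlinarith

lemma ConvexCyclic.injective_edge (hP : ConvexCyclic P) : Function.Injective w := by
  intro a b hab
  by_contra hne
  obtain ⟨_, -, hturn⟩ := hP.exists_turn_sign hN ht hw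
  by_cases h₁ : b = a + 1
  · simpa [h₁, hab] using hturn a
  by_cases h₂ : a = b + 1
  · simpa [← h₂, hab] using hturn b
  obtain ⟨δ, -, hconv⟩ := hP.exists_sign
  have hab' := hconv a b (Ne.symm hne) h₁
  have hba := hconv b a hne h₂
  rw [hw, hab, cross_smul_left] at hab'
  rw [hw, show P a - P b = -(P b - P a) by ring, cross_neg_right,
    cross_smul_left] at hba
  nlinarith [mul_pos (ht b) hab', mul_pos (ht a) hba]

end ConvexPolygon

lemma OrGraph.dst_rev (G : OrGraph) (e : G.E) : G.dst (G.rev e) = G.src e := by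
  rw [← G.src_rev, G.rev_rev]

lemma OrGraph.rev_eq_iff (G : OrGraph) {a b : G.E} : G.rev a = b ↔ a = G.rev b :=
  ⟨fun h => by rw [← h, G.rev_rev], fun h => by rw [h, G.rev_rev]⟩

def IsConvexEdgeCycle (G : OrGraph) (α : G.E → Zm 2) {N : ℕ} (cyc : ZMod N → G.E) : Prop :=
  (∀ i, G.dst (cyc i) = G.src (cyc (i + 1))) ∧
  ∃ (P : ZMod N → ℂ) (t : ZMod N → ℝ), ConvexCyclic P ∧ (∀ i, 0 < t i) ∧
    ∀ i, P (i + 1) - P i = t i • toC (α (cyc i))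

namespace IsConvexEdgeCycle

variable {G : OrGraph} {α : G.E → Zm 2} {N : ℕ} {cyc : ZMod N → G.E}

lemma reverse (hα : ∀ e, α (G.rev e) = -α e) (h : IsConvexEdgeCycle G α cyc) :
    IsConvexEdgeCycle G α (fun i => G.rev (cyc (-1 - i))) := by
  obtain ⟨hchain, P, t, hP, ht, hw⟩ := h
  refine ⟨fun i => ?_, fun i => P (-i), fun i => t (-1 - i), hP.comp_neg, fun i => ht _,
    fun i => ?_⟩
  · rw [G.dst_rev, G.src_rev, hchain, show -1 - (i + 1) + 1 = -1 - i by ring]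
  · have h := hw (-1 - i)
    rw [show -1 - i + 1 = -i by ring] at h
    simp only [hα, toC_neg, smul_neg, ← h, show -(i + 1) = -1 - i by ring]
    ring

lemma exists_turn_sign (hN : 3 ≤ N) (h : IsConvexEdgeCycle G α cyc) :
    ∃ δ : ℝ, (δ = 1 ∨ δ = -1) ∧
      ∀ i, 0 < δ * cross (toC (α (cyc i))) (toC (α (cyc (i + 1)))) :=
  have ⟨_, _, _, hP, ht, hw⟩ := h
  hP.exists_turn_sign hN ht hw

lemma injective_label (hN : 3 ≤ N) (h : IsConvexEdgeCycle G α cyc) :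
    Function.Injective (fun i => α (cyc i)) :=
  have ⟨_, _, _, hP, ht, hw⟩ := h
  Function.Injective.of_comp (f := toC) (hP.injective_edge hN ht hw)

end IsConvexEdgeCycle

lemma IsPolytopeTypeSub.exists_convexEdgeCycle {G : OrGraph} {α : G.E → Zm 2} {Sub : Set G.E}
    (hα : ∀ e, α (G.rev e) = -α e) (hSub : IsPolytopeTypeSub G α Sub) {e : G.E}
    (he : e ∈ Sub) :
    ∃ N, 3 ≤ N ∧ ∃ cyc : ZMod N → G.E,
      IsConvexEdgeCycle G α cyc ∧ (∀ i, cyc i ∈ Sub) ∧ ∃ i, cyc i = e := by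
  obtain ⟨⟨-, hrev, -⟩, N, hN, cyc, P, t, hmem, hcover, hchain, hP, ht, hw⟩ := hSub
  have hcyc : IsConvexEdgeCycle G α cyc := ⟨hchain, P, t, hP, ht, hw⟩
  obtain ⟨i, rfl | rfl⟩ := hcover e he
  · exact ⟨N, hN, cyc, hcyc, hmem, i, rfl⟩
  · refine ⟨N, hN, _, hcyc.reverse hα, fun j => hrev _ (hmem _), -1 - i, ?_⟩
    simp

theorem exists_pos_run {n : ℕ} [NeZero n] {κ : ZMod (2 * n) → ℤ} (hne : ∀ j, κ j ≠ 0)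
    (hanti : ∀ j, κ (j + n) = -κ j)
    (hpairs : (Finset.univ.filter (fun j => 0 < κ (j - 1) ∧ 0 < κ j)).card = n - 1) :
    ∃ m : ZMod (2 * n), ∀ j, 0 < κ j ↔ ∃ d < n, j = m + d := by
  have hpos : (Finset.univ.filter (fun j => 0 < κ j)).card = n := by
    have hflip : (Finset.univ.filter (fun j => 0 < κ j)).card =
        (Finset.univ.filter (fun j => ¬ 0 < κ j)).card := by
      simp only [← Fintype.card_subtype]
      refine Fintype.card_congr (Equiv.subtypeEquiv (Equiv.addRight (n : ZMod (2 * n))) ?_)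
      intro j
      simp only [Equiv.coe_addRight, hanti]
      have := hne j
      omega
    have := Finset.card_filter_add_card_filter_not (s := Finset.univ)
      (fun j : ZMod (2 * n) => 0 < κ j)
    rw [Finset.card_univ, ZMod.card] at this
    omega
  -- the `n` positive positions are the `n - 1` interior ones and the starts of runs
  obtain ⟨m, hm⟩ : ∃ m, Finset.univ.filter (fun j => κ (j - 1) < 0 ∧ 0 < κ j) = {m} := by
    refine Finset.card_eq_one.mp ?_
    have := Finset.card_filter_add_card_filter_not
      (s := Finset.univ.filter (fun j => 0 < κ j)) (fun j => 0 < κ (j - 1))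
    simp only [Finset.filter_filter, hpos] at this
    rw [Finset.filter_congr (fun j _ => and_comm), hpairs,
      Finset.filter_congr (fun j _ => show (0 < κ j ∧ ¬ 0 < κ (j - 1)) ↔
        (κ (j - 1) < 0 ∧ 0 < κ j) by have := hne (j - 1); omega)] at this
    have : 0 < n := Nat.pos_of_neZero n
    omega
  have hstart : ∀ j, κ (j - 1) < 0 → 0 < κ j → j = m := fun j h₁ h₂ => by
    simpa [hm] using (Finset.ext_iff.mp hm j).mp (by simp [h₁, h₂])
  have hrun : ∀ d < n, 0 < κ (m + d) := by
    intro d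
    induction d with
    | zero =>
      intro _
      have := (Finset.ext_iff.mp hm m).mpr (Finset.mem_singleton_self m)
      simpa using (Finset.mem_filter.mp this).2.2
    | succ d ih =>
      intro hd
      by_contra! hle
      have hlt : κ (m + (d + 1 : ℕ)) < 0 := lt_of_le_of_ne hle (hne _)
      -- otherwise a second run would start at `m + d + 1 + n`
      have hx := hstart (m + (d + 1 : ℕ) + n)
        (by rw [show m + (d + 1 : ℕ) + n - 1 = m + d + n by push_cast; ring, hanti]
            linarith [ih (by omega)])
        (by rw [hanti]; linarith)
      exact ZMod.natCast_ne_zero_of_lt (N := 2 * n) (a := d + 1 + n) (by omega) (by omega)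
        (by push_cast at hx ⊢; linear_combination hx)
  refine ⟨m, fun j => ⟨fun hj => ?_, ?_⟩⟩
  · refine ⟨(j - m).val, ?_, by rw [ZMod.natCast_zmod_val]; ring⟩
    by_contra! hd
    have hlt := ZMod.val_lt (j - m)
    have hj' : j = m + ((j - m).val - n : ℕ) + n := by
      rw [Nat.cast_sub hd, ZMod.natCast_zmod_val]; ring
    have := hrun ((j - m).val - n) (by omega)
    rw [hj', hanti] at hj
    linarith
  · rintro ⟨d, hd, rfl⟩
    exact hrun d hd

namespace Section7

variable (S : Section7)

instance : NeZero S.n := ⟨by have := S.hn; omega⟩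

/-- The basic edges of `Γ` form one cycle of length `2n` covering the base twice; position
`j` of this cycle lies over the base vertex `proj j`. -/
def proj : ZMod (2 * S.n) →+* ZMod S.n := ZMod.castHom (dvd_mul_left S.n 2) _

/-- Positions `0, …, n-1` run along the edges `f i`, positions `n, …, 2n-1` along the `h i`. -/
def IsLower (j : ZMod (2 * S.n)) : Prop := j.val < S.n

instance (j : ZMod (2 * S.n)) : Decidable (S.IsLower j) := Nat.decLt _ _

def basicEdge (j : ZMod (2 * S.n)) : S.G.E :=
  if S.IsLower j then S.f (S.proj j) else S.h (S.proj j)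

def vtx (j : ZMod (2 * S.n)) : S.G.V := S.G.src (S.basicEdge j)

def fiberEdge (j : ZMod (2 * S.n)) : S.G.E :=
  if S.IsLower j then S.g (S.proj j) else S.G.rev (S.g (S.proj j))

def fiberCoeff (j : ZMod (2 * S.n)) : ℤ :=
  if S.IsLower j then S.k (S.proj j) else -S.k (S.proj j)

def baseLabel (j : ZMod (2 * S.n)) : Zm 2 := S.aB (S.e (S.proj j))

variable {S}

lemma val_proj (j : ZMod (2 * S.n)) :
    (S.proj j).val = if S.IsLower j then j.val else j.val - S.n := by
  simp only [proj, ZMod.castHom_apply, ZMod.cast_eq_val, ZMod.val_natCast]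
  have := ZMod.val_lt j
  by_cases h : S.IsLower j
  · rw [if_pos h, Nat.mod_eq_of_lt h]
  · rw [if_neg h, Nat.mod_eq_sub_mod (not_lt.mp h), Nat.mod_eq_of_lt (by omega)]

lemma proj_eq_zero_iff (j : ZMod (2 * S.n)) : S.proj j = 0 ↔ j.val = 0 ∨ j.val = S.n := by
  rw [← ZMod.val_eq_zero, val_proj]
  by_cases h : S.IsLower j <;> simp only [h, if_true, if_false] <;> unfold IsLower at h <;> omega

lemma proj_add_n (j : ZMod (2 * S.n)) : S.proj (j + S.n) = S.proj j := by
  simp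

lemma isLower_add_n (j : ZMod (2 * S.n)) : S.IsLower (j + S.n) ↔ ¬ S.IsLower j := by
  have := ZMod.val_lt j
  unfold IsLower
  rw [ZMod.val_add_natCast_of_lt j (show S.n < 2 * S.n by omega)]
  split_ifs <;> omega

/-- The twist: the walk along the basic edges switches between the `f`- and the `h`-edges
exactly when it passes over the base vertex `0`. -/
lemma isLower_add_one (j : ZMod (2 * S.n)) :
    S.IsLower (j + 1) ↔ (S.IsLower j ↔ S.proj (j + 1) ≠ 0) := by
  have := ZMod.val_lt j
  have h := ZMod.val_add_natCast_of_lt j (a := 1) (by have := S.hn; omega)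
  rw [Nat.cast_one] at h
  rw [Ne, proj_eq_zero_iff]
  unfold IsLower
  rw [h]
  split <;> omega

lemma eq_of_proj_eq {j j' : ZMod (2 * S.n)} (hproj : S.proj j = S.proj j')
    (hlow : S.IsLower j ↔ S.IsLower j') : j = j' := by
  have h := congrArg ZMod.val hproj
  rw [val_proj, val_proj] at h
  have := ZMod.val_lt j
  have := ZMod.val_lt j'
  apply ZMod.val_injective
  by_cases hj : S.IsLower j
  · rw [if_pos hj, if_pos (hlow.mp hj)] at h
    exact h
  · rw [if_neg hj, if_neg (hlow.not.mp hj)] at h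
    unfold IsLower at hj hlow
    omega

lemma aG_rev (e : S.G.E) : S.aG (S.G.rev e) = -S.aG e :=
  have ⟨_, _, _, hC⟩ := S.hG
  hC.2.2 e

lemma aG_of_not_vertical {e : S.G.E} (he : ¬ S.π.Vertical e) : S.aG e = S.aB (S.π.onE e) :=
  have ⟨_, _, _, _, _, hcompat⟩ := S.hfib
  hcompat.1 e he

lemma vertical_rev (e : S.G.E) : S.π.Vertical (S.G.rev e) ↔ S.π.Vertical e := by
  rw [GraphFib.Vertical, GraphFib.Vertical, S.G.src_rev, S.G.dst_rev, eq_comm]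

lemma proj_add_one (j : ZMod (2 * S.n)) : S.proj (j + 1) = S.proj j + 1 := by
  rw [map_add, map_one]

lemma proj_sub_one (j : ZMod (2 * S.n)) : S.proj (j - 1) = S.proj j - 1 := by
  rw [map_sub, map_one]

lemma not_vertical_basicEdge (j : ZMod (2 * S.n)) : ¬ S.π.Vertical (S.basicEdge j) := by
  unfold basicEdge
  split_ifs
  exacts [S.f_horiz _, S.h_horiz _]

lemma vertical_fiberEdge (j : ZMod (2 * S.n)) : S.π.Vertical (S.fiberEdge j) := by
  unfold fiberEdge
  split_ifs
  exacts [S.g_vert _, (vertical_rev _).mpr (S.g_vert _)]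

lemma onE_basicEdge (j : ZMod (2 * S.n)) : S.π.onE (S.basicEdge j) = S.e (S.proj j) := by
  unfold basicEdge
  split_ifs
  exacts [S.f_over _, S.h_over _]

lemma aG_basicEdge (j : ZMod (2 * S.n)) : S.aG (S.basicEdge j) = S.baseLabel j := by
  rw [aG_of_not_vertical (not_vertical_basicEdge j), onE_basicEdge, baseLabel]

lemma baseLabel_add_n (j : ZMod (2 * S.n)) : S.baseLabel (j + S.n) = S.baseLabel j := by
  rw [baseLabel, baseLabel, proj_add_n]

lemma dst_basicEdge (j : ZMod (2 * S.n)) : S.G.dst (S.basicEdge j) = S.vtx (j + 1) := by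
  have hside := isLower_add_one j
  rw [proj_add_one] at hside
  have hproj := proj_add_one j
  by_cases hj : S.IsLower j <;> by_cases h0 : S.proj j + 1 = 0
  · have hj' : ¬ S.IsLower (j + 1) := by tauto
    simp only [vtx, basicEdge, hj, hj', hproj, if_true, if_false,
      show S.proj j = -1 by linear_combination h0, neg_add_cancel, S.twist_f]
  · have hj' : S.IsLower (j + 1) := by tauto
    simp only [vtx, basicEdge, hj, hj', hproj, if_true, S.chain_f _ h0]
  · have hj' : S.IsLower (j + 1) := by tauto
    simp only [vtx, basicEdge, hj, hj', hproj, if_true, if_false,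
      show S.proj j = -1 by linear_combination h0, neg_add_cancel, S.twist_h]
  · have hj' : ¬ S.IsLower (j + 1) := by tauto
    simp only [vtx, basicEdge, hj, hj', hproj, if_false, S.chain_h _ h0]

lemma src_fiberEdge (j : ZMod (2 * S.n)) : S.G.src (S.fiberEdge j) = S.vtx j := by
  unfold fiberEdge vtx basicEdge
  split_ifs
  exacts [S.g_src _, by rw [S.G.src_rev, S.g_dst]]

lemma dst_fiberEdge (j : ZMod (2 * S.n)) : S.G.dst (S.fiberEdge j) = S.vtx (j + S.n) := by
  have hside := isLower_add_n j
  by_cases hj : S.IsLower j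
  · have hj' : ¬ S.IsLower (j + S.n) := by tauto
    simp only [fiberEdge, vtx, basicEdge, hj, hj', proj_add_n, if_true, if_false, S.g_dst]
  · have hj' : S.IsLower (j + S.n) := by tauto
    simp only [fiberEdge, vtx, basicEdge, hj, hj', proj_add_n, if_true, if_false,
      S.G.dst_rev, S.g_src]

lemma aG_fiberEdge (j : ZMod (2 * S.n)) :
    S.aG (S.fiberEdge j) = S.fiberCoeff j • S.baseLabel (j - 1) -
      S.fiberCoeff (j - 1) • S.baseLabel j := by
  have hside := isLower_add_one (j - 1)
  rw [sub_add_cancel] at hside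
  have hw := S.fiberweight (S.proj j)
  by_cases hj : S.IsLower j <;> by_cases h0 : S.proj j = 0
  · have hj' : ¬ S.IsLower (j - 1) := by tauto
    rw [if_pos h0] at hw
    simp only [fiberEdge, fiberCoeff, baseLabel, hj, hj', proj_sub_one, if_true, if_false, hw]
  · have hj' : S.IsLower (j - 1) := by tauto
    rw [if_neg h0] at hw
    simp only [fiberEdge, fiberCoeff, baseLabel, hj, hj', proj_sub_one, if_true, hw]
  · have hj' : S.IsLower (j - 1) := by tauto
    rw [if_pos h0] at hw
    simp only [fiberEdge, fiberCoeff, baseLabel, hj, hj', proj_sub_one, if_true, if_false,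
      aG_rev, hw]
    module
  · have hj' : ¬ S.IsLower (j - 1) := by tauto
    rw [if_neg h0] at hw
    simp only [fiberEdge, fiberCoeff, baseLabel, hj, hj', proj_sub_one, if_false, aG_rev, hw]
    module

lemma fiberCoeff_ne_zero (j : ZMod (2 * S.n)) : S.fiberCoeff j ≠ 0 := by
  unfold fiberCoeff
  split_ifs
  exacts [S.k_ne _, neg_ne_zero.mpr (S.k_ne _)]

lemma fiberCoeff_add_n (j : ZMod (2 * S.n)) : S.fiberCoeff (j + S.n) = -S.fiberCoeff j := by
  have hside := isLower_add_n j
  by_cases hj : S.IsLower j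
  · have hj' : ¬ S.IsLower (j + S.n) := by tauto
    simp only [fiberCoeff, hj, hj', proj_add_n, if_true, if_false]
  · have hj' : S.IsLower (j + S.n) := by tauto
    simp only [fiberCoeff, hj, hj', proj_add_n, if_true, if_false, neg_neg]

lemma basicEdge_add_n_ne (j : ZMod (2 * S.n)) : S.basicEdge (j + S.n) ≠ S.basicEdge j := by
  have hside := isLower_add_n j
  by_cases hj : S.IsLower j
  · have hj' : ¬ S.IsLower (j + S.n) := by tauto
    simpa only [basicEdge, hj, hj', proj_add_n, if_true, if_false] using (S.f_ne_h _).symm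
  · have hj' : S.IsLower (j + S.n) := by tauto
    simpa only [basicEdge, hj, hj', proj_add_n, if_true, if_false] using S.f_ne_h _

lemma onV_vtx (j : ZMod (2 * S.n)) : S.π.onV (S.vtx j) = S.v (S.proj j) := by
  rw [vtx, ← S.π.src_onE _ (not_vertical_basicEdge j), onE_basicEdge, S.src_e]

lemma vtx_injective : Function.Injective S.vtx := by
  intro j j' h
  have hproj : S.proj j = S.proj j' := S.v_bij.1 (by rw [← onV_vtx, ← onV_vtx, h])
  refine eq_of_proj_eq hproj ?_
  -- on different sides, `h` would make the fiber edge over `proj j` a loop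
  by_contra hside
  apply S.G.no_loop (S.g (S.proj j))
  by_cases hj : S.IsLower j
  · have hj' : ¬ S.IsLower j' := by tauto
    simp only [vtx, basicEdge, hj, hj', if_true, if_false, ← hproj] at h
    rw [S.g_src, S.g_dst, h]
  · have hj' : S.IsLower j' := by tauto
    simp only [vtx, basicEdge, hj, hj', if_true, if_false, ← hproj] at h
    rw [S.g_src, S.g_dst, h]

lemma basicEdge_ne_rev_basicEdge_sub_one (j : ZMod (2 * S.n)) :
    S.basicEdge j ≠ S.G.rev (S.basicEdge (j - 1)) := by
  intro h
  have h' := congrArg (S.B.dst ∘ S.π.onE) h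
  simp only [Function.comp, S.π.rev_onE _ (not_vertical_basicEdge _), onE_basicEdge,
    S.B.dst_rev, S.dst_e, S.src_e, proj_sub_one] at h'
  exact ZMod.natCast_ne_zero_of_lt (N := S.n) two_pos (by have := S.hn; omega)
    (by push_cast; linear_combination S.v_bij.1 h')

lemma basicEdge_ne_fiberEdge (j : ZMod (2 * S.n)) : S.basicEdge j ≠ S.fiberEdge j :=
  fun h => not_vertical_basicEdge j (h ▸ vertical_fiberEdge j)

lemma rev_basicEdge_ne_fiberEdge (j j' : ZMod (2 * S.n)) :
    S.G.rev (S.basicEdge j) ≠ S.fiberEdge j' :=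
  fun h => not_vertical_basicEdge j ((vertical_rev _).mp (h ▸ vertical_fiberEdge j'))

lemma filter_src_eq_vtx (j : ZMod (2 * S.n)) :
    Finset.univ.filter (fun e => S.G.src e = S.vtx j) =
      {S.basicEdge j, S.G.rev (S.basicEdge (j - 1)), S.fiberEdge j} := by
  symm
  apply Finset.eq_of_subset_of_card_le
  · intro e he
    refine Finset.mem_filter.mpr ⟨Finset.mem_univ _, ?_⟩
    simp only [Finset.mem_insert, Finset.mem_singleton] at he
    rcases he with rfl | rfl | rfl
    exacts [rfl, by rw [S.G.src_rev, dst_basicEdge, sub_add_cancel], src_fiberEdge j]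
  · rw [← Fintype.card_subtype, S.hG.1, Finset.card_eq_three.mpr ⟨_, _, _,
    basicEdge_ne_rev_basicEdge_sub_one j, basicEdge_ne_fiberEdge j,
    rev_basicEdge_ne_fiberEdge (j - 1) j, rfl⟩]

lemma src_eq_vtx_iff {j : ZMod (2 * S.n)} {e : S.G.E} :
    S.G.src e = S.vtx j ↔
      e = S.basicEdge j ∨ e = S.G.rev (S.basicEdge (j - 1)) ∨ e = S.fiberEdge j := by
  simpa using Finset.ext_iff.mp (filter_src_eq_vtx j) e

lemma vtx_surjective : Function.Surjective S.vtx := by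
  intro p
  induction S.hG.2.1 (S.vtx 0) p with
  | refl => exact ⟨0, rfl⟩
  | tail _ hadj ih =>
    obtain ⟨j, rfl⟩ := ih
    obtain ⟨e, hsrc, rfl⟩ := hadj
    rcases src_eq_vtx_iff.mp hsrc with rfl | rfl | rfl
    · exact ⟨j + 1, (dst_basicEdge j).symm⟩
    · exact ⟨j - 1, by rw [S.G.dst_rev, vtx]⟩
    · exact ⟨j + S.n, (dst_fiberEdge j).symm⟩

lemma fiberEdge_not_mem {Sub : Set S.G.E} (hSub : IsSigned2ValentSub S.G S.aG Sub)
    {j : ZMod (2 * S.n)} (h₁ : S.basicEdge j ∈ Sub)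
    (h₂ : S.G.rev (S.basicEdge (j - 1)) ∈ Sub) : S.fiberEdge j ∉ Sub := by
  intro h₃
  have hall : ∀ e, e ∈ Sub ∧ S.G.src e = S.vtx j ↔ S.G.src e = S.vtx j := fun e =>
    ⟨And.right, fun he => ⟨by rcases src_eq_vtx_iff.mp he with rfl | rfl | rfl <;> assumption,
      he⟩⟩
  have h2 := hSub.2.2.1 (S.vtx j) ⟨_, h₁, rfl⟩
  rw [Nat.card_congr (Equiv.subtypeEquivRight hall), Nat.card_eq_fintype_card, S.hG.1] at h2
  omega

lemma exists_baseLabel_turn_sign :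
    ∃ δ : ℝ, (δ = 1 ∨ δ = -1) ∧
      ∀ j, 0 < δ * cross (toC (S.baseLabel j)) (toC (S.baseLabel (j + 1))) := by
  obtain ⟨δ, hδ, hturn⟩ := S.polygon.exists_turn_sign S.hn S.tl_pos S.slope
  exact ⟨δ, hδ, fun j => by simpa only [baseLabel, proj_add_one] using hturn (S.proj j)⟩

lemma interiorVtx_vtx_iff (j : ZMod (2 * S.n)) :
    InteriorVtx S.G S.aG (S.vtx j) ↔ 0 < S.fiberCoeff (j - 1) ∧ 0 < S.fiberCoeff j := by
  obtain ⟨δ, -, hturn⟩ := exists_baseLabel_turn_sign (S := S)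
  set u := toC (S.aG (S.basicEdge j))
  set v := toC (S.aG (S.G.rev (S.basicEdge (j - 1))))
  have huv : cross u v ≠ 0 := by
    have h := hturn (j - 1)
    rw [sub_add_cancel] at h
    simp only [u, v, aG_rev, aG_basicEdge, toC_neg, cross_neg_right]
    rw [← cross_swap]
    exact right_ne_zero_of_mul h.ne'
  have hw : toC (S.aG (S.fiberEdge j)) =
      (-(S.fiberCoeff (j - 1) : ℝ)) • u + (-(S.fiberCoeff j : ℝ)) • v := by
    simp only [u, v, aG_fiberEdge, aG_rev, aG_basicEdge, toC_sub, toC_zsmul, toC_neg]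
    module
  unfold InteriorVtx
  simp only [filter_src_eq_vtx, exists_nonneg_sum_three_iff (basicEdge_ne_rev_basicEdge_sub_one j)
    (basicEdge_ne_fiberEdge j) (rev_basicEdge_ne_fiberEdge (j - 1) j)]
  rw [hw, cone_eq_univ_iff huv]
  simp only [Left.neg_neg_iff, Int.cast_pos]

lemma card_filter_interior :
    (Finset.univ.filter (fun j => 0 < S.fiberCoeff (j - 1) ∧ 0 < S.fiberCoeff j)).card =
      S.n - 1 := by
  rw [← S.interior_count, ← Fintype.card_subtype, ← Nat.card_eq_fintype_card]
  exact Nat.card_congr (Equiv.subtypeEquiv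
    (Equiv.ofBijective _ ⟨vtx_injective, vtx_surjective⟩) fun j => (interiorVtx_vtx_iff j).symm)

lemma exists_fiberCoeff_pos_run :
    ∃ m : ZMod (2 * S.n), ∀ j, 0 < S.fiberCoeff j ↔ ∃ d < S.n, j = m + d :=
  exists_pos_run fiberCoeff_ne_zero fiberCoeff_add_n card_filter_interior

section Forcing

variable {N : ℕ} {cyc : ZMod N → S.G.E}
  (hchain : ∀ i, S.G.dst (cyc i) = S.G.src (cyc (i + 1))) {δ : ℝ}
  (hbase : ∀ j, 0 < δ * cross (toC (S.baseLabel j)) (toC (S.baseLabel (j + 1))))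
  (hturn : ∀ i, 0 < δ * cross (toC (S.aG (cyc i))) (toC (S.aG (cyc (i + 1)))))
include hchain hbase hturn

/-- A convex cycle turning like the base polygon must continue along the basic edges where the
fiber coefficient is positive: turning into the fiber edge would have the wrong sign. -/
lemma eq_basicEdge_add_one {i : ZMod N} {x : ZMod (2 * S.n)} (hi : cyc i = S.basicEdge x)
    (hx : 0 < S.fiberCoeff x) : cyc (i + 1) = S.basicEdge (x + 1) := by
  have hsrc : S.G.src (cyc (i + 1)) = S.vtx (x + 1) := by rw [← hchain, hi, dst_basicEdge]
  have h := hturn i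
  rcases src_eq_vtx_iff.mp hsrc with hnext | hnext | hnext
  · exact hnext
  · rw [hi, hnext, add_sub_cancel_right, aG_rev, toC_neg, cross_neg_right, cross_self] at h
    simp at h
  · rw [hi, hnext, aG_fiberEdge, add_sub_cancel_right, aG_basicEdge] at h
    simp only [toC_sub, toC_zsmul, cross_sub_right, cross_smul_right, cross_self] at h
    nlinarith [hbase x, (Int.cast_pos (R := ℝ)).mpr hx]

lemma eq_basicEdge_sub_one {i : ZMod N} {x : ZMod (2 * S.n)} (hi : cyc i = S.basicEdge x)
    (hx : 0 < S.fiberCoeff x) : cyc (i - 1) = S.basicEdge (x - 1) := by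
  have hsrc : S.G.src (S.G.rev (cyc (i - 1))) = S.vtx x := by
    rw [S.G.src_rev, hchain, sub_add_cancel, hi, vtx]
  have h := hturn (i - 1)
  rw [sub_add_cancel, hi] at h
  rcases src_eq_vtx_iff.mp hsrc with hprev | hprev | hprev <;> rw [S.G.rev_eq_iff] at hprev
  · rw [hprev, aG_rev, toC_neg, cross_neg_left, cross_self] at h
    simp at h
  · rwa [S.G.rev_rev] at hprev
  · rw [hprev, aG_rev, aG_fiberEdge, aG_basicEdge] at h
    simp only [toC_neg, toC_sub, toC_zsmul, cross_neg_left, cross_sub_left, cross_smul_left,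
      cross_self] at h
    have := hbase (x - 1)
    rw [sub_add_cancel] at this
    nlinarith [(Int.cast_pos (R := ℝ)).mpr hx]

lemma eq_basicEdge_add_natCast {i : ZMod N} {x : ZMod (2 * S.n)} (hi : cyc i = S.basicEdge x)
    {k : ℕ} (hpos : ∀ d < k, 0 < S.fiberCoeff (x + d)) : cyc (i + k) = S.basicEdge (x + k) := by
  induction k with
  | zero => simpa using hi
  | succ k ih =>
    push_cast
    rw [← add_assoc, ← add_assoc]
    exact eq_basicEdge_add_one hchain hbase hturn (ih fun d hd => hpos d (by omega))
      (hpos k (by omega))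

lemma eq_basicEdge_sub_natCast {i : ZMod N} {x : ZMod (2 * S.n)} (hi : cyc i = S.basicEdge x)
    {k : ℕ} (hpos : ∀ d < k, 0 < S.fiberCoeff (x - d)) : cyc (i - k) = S.basicEdge (x - k) := by
  induction k with
  | zero => simpa using hi
  | succ k ih =>
    push_cast
    rw [← sub_sub, ← sub_sub]
    exact eq_basicEdge_sub_one hchain hbase hturn (ih fun d hd => hpos d (by omega))
      (hpos k (by omega))

end Forcing

lemma eq_basicEdge_or_of_src_eq_vtx {j : ZMod (2 * S.n)} {e : S.G.E} (he : S.G.src e = S.vtx j)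
    (hv : ¬ S.π.Vertical e) : e = S.basicEdge j ∨ e = S.G.rev (S.basicEdge (j - 1)) := by
  rcases src_eq_vtx_iff.mp he with rfl | rfl | rfl
  exacts [Or.inl rfl, Or.inr rfl, absurd (vertical_fiberEdge j) hv]

theorem not_basicEdges_mem_polytopeTypeSub {j : ZMod (2 * S.n)} (hj : 0 < S.fiberCoeff j)
    {Sub : Set S.G.E} (hSub : IsPolytopeTypeSub S.G S.aG Sub) (h₁ : S.basicEdge j ∈ Sub)
    (h₂ : S.G.rev (S.basicEdge (j - 1)) ∈ Sub) : False := by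
  obtain ⟨N, hN, cyc, hcyc, hmem, i, hi⟩ := hSub.exists_convexEdgeCycle aG_rev h₁
  obtain ⟨δ', hδ', hturn'⟩ := hcyc.exists_turn_sign hN
  have hprev : cyc (i - 1) = S.basicEdge (j - 1) := by
    have hsrc : S.G.src (S.G.rev (cyc (i - 1))) = S.vtx j := by
      rw [S.G.src_rev, hcyc.1, sub_add_cancel, hi, vtx]
    rcases src_eq_vtx_iff.mp hsrc with h | h | h <;> rw [S.G.rev_eq_iff] at h
    · have := hturn' (i - 1)
      rw [sub_add_cancel, h, hi, aG_rev, toC_neg, cross_neg_left, cross_self] at this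
      simp at this
    · rwa [S.G.rev_rev] at h
    · refine absurd ?_ (fiberEdge_not_mem hSub.1 h₁ h₂)
      rw [← S.G.rev_rev (S.fiberEdge j), ← h]
      exact hSub.1.2.1 _ (hmem _)
  obtain ⟨δ, hδ, hbase⟩ := exists_baseLabel_turn_sign (S := S)
  have hδδ' : δ' = δ := by
    have h := hturn' (i - 1)
    rw [sub_add_cancel, hprev, hi, aG_basicEdge, aG_basicEdge] at h
    have h' := hbase (j - 1)
    rw [sub_add_cancel] at h'
    rcases hδ with rfl | rfl <;> rcases hδ' with rfl | rfl <;> first | rfl | linarith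
  subst hδδ'
  obtain ⟨m, hm⟩ := exists_fiberCoeff_pos_run (S := S)
  obtain ⟨d, hd, rfl⟩ := (hm j).mp hj
  have hstart : cyc (i - d) = S.basicEdge m := by
    simpa using eq_basicEdge_sub_natCast hcyc.1 hbase hturn' hi (k := d) fun d' hd' =>
      (hm _).mpr ⟨d - d', by omega, by push_cast [Nat.cast_sub hd'.le]; ring⟩
  have hend : cyc (i - d + S.n) = S.basicEdge (m + S.n) :=
    eq_basicEdge_add_natCast hcyc.1 hbase hturn' hstart fun d' hd' => (hm _).mpr ⟨d', hd', rfl⟩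
  have hidx := hcyc.injective_label hN (a₁ := i - d) (a₂ := i - d + S.n)
    (by simp only [hstart, hend, aG_basicEdge, baseLabel_add_n])
  exact basicEdge_add_n_ne m (by rw [← hend, ← hstart, ← hidx])

end Section7

/-- in the Section 7 setting, the signed graph `Γ` fails the Kähler
extension criterion: the two basic edges emanating from any interior vertex are not
both contained in any 2-valent signed GKM subgraph of polytope type. -/
theorem statement8 (S : Section7) :
    (∃ p : S.G.V, InteriorVtx S.G S.aG p) ∧
    ∀ p : S.G.V, InteriorVtx S.G S.aG p →
      ∀ e e' : S.G.E, S.G.src e = p → S.G.src e' = p → e ≠ e' →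
        ¬ S.π.Vertical e → ¬ S.π.Vertical e' →
        ¬ ∃ Sub : Set S.G.E, IsPolytopeTypeSub S.G S.aG Sub ∧ e ∈ Sub ∧ e' ∈ Sub := by
  constructor
  · have hcard := S.interior_count
    have : Nat.card {p // InteriorVtx S.G S.aG p} ≠ 0 := by have := S.hn; omega
    obtain ⟨⟨p, hp⟩⟩ := (Nat.card_ne_zero.mp this).1
    exact ⟨p, hp⟩
  · rintro p hp e e' he he' hne hv hv' ⟨Sub, hSub, heS, he'S⟩
    obtain ⟨j, rfl⟩ := Section7.vtx_surjective p
    have hj := ((Section7.interiorVtx_vtx_iff j).mp hp).2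
    rcases Section7.eq_basicEdge_or_of_src_eq_vtx he hv with rfl | rfl <;>
      rcases Section7.eq_basicEdge_or_of_src_eq_vtx he' hv' with rfl | rfl
    · exact hne rfl
    · exact Section7.not_basicEdges_mem_polytopeTypeSub hj hSub heS he'S
    · exact Section7.not_basicEdges_mem_polytopeTypeSub hj hSub he'S heS
    · exact hne rfl

end GKMPaper
end

section
/- In the Section 7 setting, let Γ' be a signed GKM structure on the underlying graph of Γ which induces the same unsigned GKM graph as Γ and in which, for every i, the labels of the two basic edges f_i and h_i over e_i agree. Then the weights of the fiber edges of Γ' agree with those of Γ up to a global sign: either α'_i = α_i for all i, or α'_i = −α_i for all i, where α_i and α'_i denote the weights of the oriented fiber edge g_i in Γ and Γ' respectively. -/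
open Classical

namespace GKMPaper

lemma OrGraph.eq_or_eq_or_eq_of_regular {G : OrGraph} (hG : G.Regular 3) {a b c x : G.E}
    (ha : G.src a = G.src x) (hb : G.src b = G.src x) (hc : G.src c = G.src x)
    (hab : a ≠ b) (hac : a ≠ c) (hbc : b ≠ c) : x = a ∨ x = b ∨ x = c := by
  let out : Finset {e : G.E // G.src e = G.src x} := {⟨a, ha⟩, ⟨b, hb⟩, ⟨c, hc⟩}
  have hout : out = Finset.univ := by
    refine out.eq_univ_of_card ?_
    rw [hG, Finset.card_eq_three]
    exact ⟨_, _, _, by simpa using hab, by simpa using hac, by simpa using hbc, rfl⟩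
  have hx : (⟨x, rfl⟩ : {e : G.E // G.src e = G.src x}) ∈ out := hout ▸ Finset.mem_univ _
  simpa [out, Subtype.ext_iff] using hx

lemma Connection.t_ne_rev {G : OrGraph} (C : Connection G) {e f : G.E}
    (hsrc : G.src f = G.src e) (hne : f ≠ e) : C.t e f ≠ G.rev e := by
  intro h
  have hinv := C.t_inv e f hsrc
  rw [h, C.t_self, G.rev_rev] at hinv
  exact hne hinv.symm

lemma GraphFib.vertical_rev_iff {G B : OrGraph} (π : GraphFib G B) (e : G.E) :
    π.Vertical (G.rev e) ↔ π.Vertical e := by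
  rw [GraphFib.Vertical, GraphFib.Vertical, G.src_rev, G.dst_rev, eq_comm]

section SignedCompat

variable {m : ℕ} {G : OrGraph} {β : G.E → Zm m} {C : Connection G}

lemma SignedCompat.map_t_eq (hC : SignedCompat G β C) (ℓ : Zm m →ₗ[ℤ] ℤ) {e f : G.E}
    (hsrc : G.src f = G.src e) (he : ℓ (β e) = 0) : ℓ (β (C.t e f)) = ℓ (β f) := by
  obtain ⟨c, hc⟩ := hC.2.1 e f hsrc
  rw [hc, map_add, map_zsmul, he, smul_zero, add_zero]

lemma SignedCompat.map_rev (hC : SignedCompat G β C) (ℓ : Zm m →ₗ[ℤ] ℤ) (e : G.E) :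
    ℓ (β (G.rev e)) = -ℓ (β e) := by
  rw [hC.2.2, map_neg]

/-- `a : p → q` and `b : p' → q'` are horizontal, `x : p → p'` and `y : q → q'` vertical,
and `a'`, `b'` are the other horizontal edges at `q`, `q'`. Transporting `x` along `a`
and `x` reversed along `b` ends at `y` or at `a'` resp. `b'`; the latter is impossible
since `ℓ` would then take the value `ℓ (β x)` and its negative on `β a' = β b'`. -/
theorem SignedCompat.map_eq_of_square {B : OrGraph} {π : GraphFib G B}
    (hC : SignedCompat G β C) (hG : G.Regular 3) (ℓ : Zm m →ₗ[ℤ] ℤ)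
    {a b a' b' x y : G.E}
    (ha : ¬ π.Vertical a) (hb : ¬ π.Vertical b) (ha' : ¬ π.Vertical a')
    (hb' : ¬ π.Vertical b') (hx : π.Vertical x) (hy : π.Vertical y)
    (hxa : G.src x = G.src a) (hxb : G.dst x = G.src b)
    (hya : G.src y = G.dst a) (hyb : G.dst y = G.dst b)
    (ha'a : G.src a' = G.dst a) (hb'b : G.src b' = G.dst b)
    (ha'_ne : a' ≠ G.rev a) (hb'_ne : b' ≠ G.rev b)
    (hℓa : ℓ (β a) = 0) (hℓb : ℓ (β b) = 0) (hβ : β a' = β b') (hℓx : ℓ (β x) ≠ 0) :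
    ℓ (β y) = ℓ (β x) := by
  have hxb' : G.src (G.rev x) = G.src b := by rw [G.src_rev, hxb]
  have hvx : π.Vertical (G.rev x) := (π.vertical_rev_iff x).2 hx
  have hvy : π.Vertical (G.rev y) := (π.vertical_rev_iff y).2 hy
  have hX : ℓ (β (C.t a x)) = ℓ (β x) := hC.map_t_eq ℓ hxa hℓa
  have hY : ℓ (β (C.t b (G.rev x))) = -ℓ (β x) := by
    rw [hC.map_t_eq ℓ hxb' hℓb, hC.map_rev]
  rcases G.eq_or_eq_or_eq_of_regular hG (a := G.rev a) (x := C.t a x) (b := a') (c := y)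
      (by rw [G.src_rev, C.src_t a x hxa]) (by rw [ha'a, C.src_t a x hxa])
      (by rw [hya, C.src_t a x hxa]) ha'_ne.symm
      (fun h => ((π.vertical_rev_iff a).not.2 ha) (h ▸ hy))
      (fun h => ha' (h ▸ hy)) with hXa | hXa' | hXy
  · exact absurd hXa (C.t_ne_rev hxa fun h => ha (h ▸ hx))
  · rcases G.eq_or_eq_or_eq_of_regular hG
        (a := G.rev b) (x := C.t b (G.rev x)) (b := b') (c := G.rev y)
        (by rw [G.src_rev, C.src_t b _ hxb']) (by rw [hb'b, C.src_t b _ hxb'])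
        (by rw [G.src_rev, hyb, C.src_t b _ hxb']) hb'_ne.symm
        (fun h => ((π.vertical_rev_iff b).not.2 hb) (h ▸ hvy))
        (fun h => hb' (h ▸ hvy)) with hYb | hYb' | hYy
    · exact absurd hYb (C.t_ne_rev hxb' fun h => hb (h ▸ hvx))
    · rw [hYb', ← hβ, ← hXa', hX] at hY
      exact absurd (by linarith) hℓx
    · rw [hYy, hC.map_rev] at hY
      exact neg_injective hY
  · rw [← hXy, hX]

end SignedCompat

lemma eq_or_eq_neg_of_pm_eq {m : ℕ} {a b : Zm m} (h : pm a = pm b) : a = b ∨ a = -b :=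
  Quotient.exact h

lemma eq_iff_eq_of_map_eq {m : ℕ} (ℓ : Zm m →ₗ[ℤ] ℤ) {a a' b b' : Zm m}
    (ha : pm a' = pm a) (hb : pm b' = pm b) (h : ℓ b = ℓ a) (h' : ℓ b' = ℓ a')
    (h0 : ℓ a ≠ 0) : a' = a ↔ b' = b := by
  rcases eq_or_eq_neg_of_pm_eq ha with rfl | rfl <;>
    rcases eq_or_eq_neg_of_pm_eq hb with rfl | rfl <;> constructor <;> intro e <;>
    first
    | rfl
    | (exfalso; apply h0; have := congrArg ℓ e; simp only [map_neg] at this h'; linarith)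

def det2 : Zm 2 →ₗ[ℤ] Zm 2 →ₗ[ℤ] ℤ :=
  LinearMap.mk₂ ℤ (fun a b => a 0 * b 1 - a 1 * b 0)
    (fun _ _ _ => by simp only [Pi.add_apply]; ring)
    (fun _ _ _ => by simp only [Pi.smul_apply, smul_eq_mul]; ring)
    (fun _ _ _ => by simp only [Pi.add_apply]; ring)
    (fun _ _ _ => by simp only [Pi.smul_apply, smul_eq_mul]; ring)

lemma det2_apply (a b : Zm 2) : det2 a b = a 0 * b 1 - a 1 * b 0 := rfl

lemma det2_eq_zero_of_pm_eq {a b : Zm 2} (h : pm a = pm b) : det2 a b = 0 := by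
  rcases eq_or_eq_neg_of_pm_eq h with rfl | rfl <;> simp only [det2_apply, Pi.neg_apply] <;> ring

lemma Indep.det2_ne_zero {a b : Zm 2} (h : Indep a b) : det2 a b ≠ 0 := by
  intro hdet
  rw [det2_apply] at hdet
  -- `b₁ a - a₁ b` and `b₀ a - a₀ b` vanish when `det2 a b = 0`
  have h1 := h (b 1) (-a 1) (by ext j; fin_cases j <;> simp <;> linarith)
  have h0 := h (b 0) (-a 0) (by ext j; fin_cases j <;> simp <;> linarith)
  have ha : a = 0 := by
    ext j; fin_cases j
    · simpa using h0.2
    · simpa using h1.2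
  exact one_ne_zero (h 1 0 (by simp [ha])).1

lemma ZMod.iff_zero_of_iff_add_one {n : ℕ} [NeZero n] {P : ZMod n → Prop}
    (h : ∀ i, P i ↔ P (i + 1)) (i : ZMod n) : P i ↔ P 0 := by
  obtain ⟨k, rfl⟩ := ZMod.natCast_zmod_surjective i
  induction k with
  | zero => rw [Nat.cast_zero]
  | succ k ih => rw [Nat.cast_succ, ← h, ih]

namespace Section7

variable (S : Section7)

lemma two_ne_zero : (2 : ZMod S.n) ≠ 0 := by
  have hn := S.hn
  intro h
  rw [show (2 : ZMod S.n) = ((2 : ℕ) : ZMod S.n) by norm_num, ZMod.natCast_eq_zero_iff] at h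
  have := Nat.le_of_dvd (by norm_num) h
  omega

lemma e_add_one_ne_rev (i : ZMod S.n) : S.e (i + 1) ≠ S.B.rev (S.e i) := by
  intro h
  have hv := congrArg S.B.dst h
  rw [S.dst_e, S.B.dst_rev, S.src_e] at hv
  apply S.two_ne_zero
  linear_combination S.v_bij.1 hv

lemma ne_rev_of_onE {a b : S.G.E} {i : ZMod S.n} (ha : ¬ S.π.Vertical a)
    (hai : S.π.onE a = S.e i) (hbi : S.π.onE b = S.e (i + 1)) : b ≠ S.G.rev a := by
  rintro rfl
  rw [S.π.rev_onE a ha, hai] at hbi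
  exact S.e_add_one_ne_rev i hbi.symm

lemma aG_f (i : ZMod S.n) : S.aG (S.f i) = S.aB (S.e i) := by
  obtain ⟨-, -, -, -, -, hlab, -⟩ := S.hfib
  rw [hlab _ (S.f_horiz i), S.f_over]

lemma aG_h (i : ZMod S.n) : S.aG (S.h i) = S.aB (S.e i) := by
  obtain ⟨-, -, -, -, -, hlab, -⟩ := S.hfib
  rw [hlab _ (S.h_horiz i), S.h_over]

/-- The fiber edge at the end of `f i`. After a full turn around the base the two lifts are
exchanged, so for `i = -1` it is `g 0` reversed. -/
def nextFiber (i : ZMod S.n) : S.G.E :=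
  if i + 1 = 0 then S.G.rev (S.g 0) else S.g (i + 1)

variable {S} {β : S.G.E → Zm 2}

lemma det2_fiber_ne_zero (hβ : ∃ C, SignedCompat S.G β C)
    (hpar : ∀ j, pm (β (S.f j)) = pm (S.aB (S.e j))) (i : ZMod S.n) :
    det2 (β (S.g i)) (S.aB (S.e i)) ≠ 0 := by
  obtain ⟨C, hC⟩ := hβ
  have hind := (hC.1 (S.g i) (S.f i) (S.g_src i).symm
    fun h => S.f_horiz i (h ▸ S.g_vert i)).det2_ne_zero
  rcases eq_or_eq_neg_of_pm_eq (hpar i) with h | h <;>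
    simpa only [h, map_neg, neg_ne_zero] using hind

theorem det2_nextFiber (hβ : ∃ C, SignedCompat S.G β C)
    (hpar : ∀ j, pm (β (S.f j)) = pm (S.aB (S.e j))) (hfh : ∀ j, β (S.f j) = β (S.h j))
    (i : ZMod S.n) :
    det2 (β (S.nextFiber i)) (S.aB (S.e i)) = det2 (β (S.g i)) (S.aB (S.e i)) := by
  obtain ⟨C, hC⟩ := id hβ
  have hℓf : det2.flip (S.aB (S.e i)) (β (S.f i)) = 0 := det2_eq_zero_of_pm_eq (hpar i)
  have hℓh : det2.flip (S.aB (S.e i)) (β (S.h i)) = 0 := by rw [← hfh]; exact hℓf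
  have hℓg := det2_fiber_ne_zero hβ hpar i
  rw [nextFiber]
  split_ifs with h0
  · obtain rfl : i = -1 := eq_neg_of_add_eq_zero_left h0
    exact hC.map_eq_of_square S.hG.1 (det2.flip _) (π := S.π)
      (a := S.f (-1)) (b := S.h (-1)) (a' := S.h 0) (b' := S.f 0)
      (S.f_horiz _) (S.h_horiz _) (S.h_horiz _) (S.f_horiz _) (S.g_vert _)
      ((S.π.vertical_rev_iff _).2 (S.g_vert _)) (S.g_src _) (S.g_dst _)
      (by rw [S.G.src_rev, S.g_dst, S.twist_f]) (by rw [S.G.dst_rev, S.g_src, S.twist_h])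
      S.twist_f.symm S.twist_h.symm
      (S.ne_rev_of_onE (S.f_horiz _) (S.f_over _) (by rw [h0, S.h_over]))
      (S.ne_rev_of_onE (S.h_horiz _) (S.h_over _) (by rw [h0, S.f_over]))
      hℓf hℓh (hfh 0).symm hℓg
  · exact hC.map_eq_of_square S.hG.1 (det2.flip _) (π := S.π)
      (a := S.f i) (b := S.h i) (a' := S.f (i + 1)) (b' := S.h (i + 1))
      (S.f_horiz _) (S.h_horiz _) (S.f_horiz _) (S.h_horiz _) (S.g_vert _) (S.g_vert _)
      (S.g_src _) (S.g_dst _) (by rw [S.g_src, S.chain_f i h0])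
      (by rw [S.g_dst, S.chain_h i h0]) (S.chain_f i h0).symm (S.chain_h i h0).symm
      (S.ne_rev_of_onE (S.f_horiz _) (S.f_over _) (S.f_over _))
      (S.ne_rev_of_onE (S.h_horiz _) (S.h_over _) (S.h_over _))
      hℓf hℓh (hfh _) hℓg

theorem fiber_eq_iff_succ (α' : S.G.E → Zm 2) (hcompat : ∃ C, SignedCompat S.G α' C)
    (hsame : ∀ ed, pm (α' ed) = pm (S.aG ed)) (hfh : ∀ j, α' (S.f j) = α' (S.h j))
    (i : ZMod S.n) :
    α' (S.g i) = S.aG (S.g i) ↔ α' (S.g (i + 1)) = S.aG (S.g (i + 1)) := by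
  have hG := S.hG.2.2
  obtain ⟨C, hC⟩ := id hcompat
  obtain ⟨CG, hCG⟩ := id hG
  have hparG : ∀ j, pm (S.aG (S.f j)) = pm (S.aB (S.e j)) := fun j => by rw [S.aG_f]
  have hpar : ∀ j, pm (α' (S.f j)) = pm (S.aB (S.e j)) := fun j => by rw [hsame, hparG]
  rw [eq_iff_eq_of_map_eq (det2.flip (S.aB (S.e i))) (hsame _) (hsame _)
    (det2_nextFiber hG hparG (fun j => by rw [S.aG_f, S.aG_h]) i)
    (det2_nextFiber hcompat hpar hfh i) (det2_fiber_ne_zero hG hparG i), nextFiber]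
  split_ifs with h0
  · rw [hC.2.2, hCG.2.2, neg_inj, h0]
  · rfl

end Section7

/-- in the Section 7 setting, if a signed GKM structure `α'` on the
underlying graph of `Γ` induces the same unsigned GKM graph and the labels of
`f i` and `h i` agree for all `i`, then the fiber weights of `α'` agree with those
of `Γ` up to a global sign. -/
theorem statement9 (S : Section7) (α' : S.G.E → Zm 2)
    (hcompat : ∃ C : Connection S.G, SignedCompat S.G α' C)
    (hsame : ∀ ed, pm (α' ed) = pm (S.aG ed))
    (hfh : ∀ i, α' (S.f i) = α' (S.h i)) :
    (∀ i, α' (S.g i) = S.aG (S.g i)) ∨ (∀ i, α' (S.g i) = - S.aG (S.g i)) := by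
  have : NeZero S.n := ⟨by have := S.hn; omega⟩
  have hconst := ZMod.iff_zero_of_iff_add_one (S.fiber_eq_iff_succ α' hcompat hsame hfh)
  by_cases h0 : α' (S.g 0) = S.aG (S.g 0)
  · exact Or.inl fun i => (hconst i).2 h0
  · exact Or.inr fun i =>
      (eq_or_eq_neg_of_pm_eq (hsame (S.g i))).resolve_left fun h => h0 ((hconst i).1 h)

end GKMPaper
end
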